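/- Every pair of separating walks of length k in G_d satisfies k ≥ 2d − 3. -/

import Mathlib

/-!
Run the two walks in lockstep and compare the current nodes from their last pairs upwards: they
share a block `s` of last pairs, and above it they may differ. After `j` steps the differing parts
obey the budget `n + 2·(largest label) ≤ 2d + [odd depth]` with `n = 2d − 3 − j − |s|`
(`Alike`). A compatible step either extends the agreement, or it opens a discrepancy at the
current depth; by the greedy choice of the pairs, the labels of a fresh discrepancy are bounded by
the labels above it, plus one below an even depth, so the budget survives the step.

The ports by which the neighbours of a node see it form `{1, …, d}` at odd depth, and at even
depth they depend only on whether the last pair starts with `d`. With a positive budget every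
discrepancy at even depth has all labels below `d`, so for `k < 2d − 3` the two endpoints offer
the same ports and cannot be separated.
-/

namespace Paper

/-- Nodes of the tree `G_d` are finite sequences of pairs of numbers.
We represent a sequence `(a₁, …, a_i)` as the list `[a_i, …, a₁]`, i.e. in
reverse order, so that consing corresponds to appending a pair at the end. -/
abbrev Nd : Type := ℕ × ℕ

/-- `b₂⁺`: `1` if `b₂ = 0`, and `b₂` otherwise. -/
def bplus (b : ℕ) : ℕ := if b = 0 then 1 else b

/-- For `j ≥ 1`, the `j`-th smallest element of `{lo, lo+1, lo+2, …} \ {f}`.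
This realises the greedy choices `c^j = min({lo,…} \ {f, c¹, …, c^{j-1}})`. -/
def nthAvoid (lo f j : ℕ) : ℕ :=
  if lo + j - 1 < f ∨ f < lo then lo + j - 1 else lo + j

/-- The node set `V_d` of the graph `G_d`, given by the rules (G1)–(G4).
(Sequences are represented as reversed lists, the head being the last pair
`a_i` of the sequence.) -/
inductive Vd (d : ℕ) : List Nd → Prop
  /-- (G1): the empty sequence is a node. -/
  | nil : Vd d []
  /-- (G2): the sequences `((1,0)), ((2,1)), …, ((d,d−1))` are nodes. -/
  | base (k : ℕ) (h1 : 1 ≤ k) (h2 : k ≤ d) : Vd d [(k, k - 1)]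
  /-- (G3): children of a node of odd length `< 2d` with last pair `(b₁, b₂)`:
  for `j = 1, …, d−1` append `(c₁ʲ, c₂ʲ)` where `c₁ʲ` is the `j`-th smallest
  element of `{1,…,d} \ {b₂⁺}` and `c₂ʲ` the `j`-th smallest of `{1,…,d} \ {b₁}`. -/
  | odd (b₁ b₂ : ℕ) (rest : List Nd)
      (hv : Vd d ((b₁, b₂) :: rest))
      (hodd : Odd ((b₁, b₂) :: rest).length)
      (hlt : ((b₁, b₂) :: rest).length < 2 * d)
      (j : ℕ) (hj1 : 1 ≤ j) (hj2 : j ≤ d - 1) :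
      Vd d ((nthAvoid 1 (bplus b₂) j, nthAvoid 1 b₁ j) :: (b₁, b₂) :: rest)
  /-- (G4): children of a node of even positive length `< 2d` with last pair
  `(b₁, b₂)`: for `j = 1, …, d−1` append `(c₁ʲ, c₂ʲ)` where `c₁ʲ` is the `j`-th
  smallest element of `{1,…,d} \ {b₂}` and `c₂ʲ` the `j`-th smallest of
  `{0,…,d−1} \ {b₁}`. -/
  | even (b₁ b₂ : ℕ) (rest : List Nd)
      (hv : Vd d ((b₁, b₂) :: rest))
      (heven : Even ((b₁, b₂) :: rest).length)
      (hlt : ((b₁, b₂) :: rest).length < 2 * d)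
      (j : ℕ) (hj1 : 1 ≤ j) (hj2 : j ≤ d - 1) :
      Vd d ((nthAvoid 1 b₂ j, nthAvoid 0 b₁ j) :: (b₁, b₂) :: rest)

/-- The edge relation of `G_d`: `u` is a child of `v` or vice versa. -/
def Ed (d : ℕ) (v u : List Nd) : Prop :=
  Vd d v ∧ Vd d u ∧ ∃ a : Nd, u = a :: v ∨ v = a :: u

/-- The outgoing port number `π_d(v, u)` from `v` towards an adjacent node `u`:
if `u = (b₁, b₂) :: v` is a child of `v` then `b₁`, and if `v = (b₁, b₂) :: u`
is a child of `u` then `b₂`. -/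
def outPort (v u : List Nd) : ℕ :=
  if u.length = v.length + 1 then u.headI.1 else v.headI.2

/-- A pair of compatible walks (PCW) of length `k` in `G_d`:
two walks starting at `((1,0))` and `((2,1))` such that the outgoing port
numbers backwards along the walks coincide. -/
structure IsPCW (d k : ℕ) (w₁ w₂ : ℕ → List Nd) : Prop where
  klen : k ≤ 2 * d - 3
  walk₁ : ∀ j < k, Ed d (w₁ j) (w₁ (j + 1))
  walk₂ : ∀ j < k, Ed d (w₂ j) (w₂ (j + 1))
  start₁ : w₁ 0 = [(1, 0)]
  start₂ : w₂ 0 = [(2, 1)]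
  compat : ∀ j, 1 ≤ j → j ≤ k →
    outPort (w₁ j) (w₁ (j - 1)) = outPort (w₂ j) (w₂ (j - 1))

/-- A pair of separating walks (PSW): a PCW such that the last node of the
first walk has a neighbour whose outgoing port number towards it is matched
by no neighbour of the last node of the second walk. -/
structure IsPSW (d k : ℕ) (w₁ w₂ : ℕ → List Nd)
    extends IsPCW d k w₁ w₂ : Prop where
  sep : ∃ x, Ed d (w₁ k) x ∧
    ∀ y, Ed d (w₂ k) y → outPort x (w₁ k) ≠ outPort y (w₂ k)

/-- A PSW of length `k` in `G_d` is critical if there is no strictly shorter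
PSW in `G_d`. -/
def IsCriticalPSW (d k : ℕ) (w₁ w₂ : ℕ → List Nd) : Prop :=
  IsPSW d k w₁ w₂ ∧ ∀ k' w₁' w₂', IsPSW d k' w₁' w₂' → k ≤ k'


lemma nthAvoid_ne {lo f j : ℕ} (hj : 1 ≤ j) : nthAvoid lo f j ≠ f := by
  unfold nthAvoid; split_ifs <;> omega

lemma nthAvoid_injective {lo f j j' : ℕ} (hj : 1 ≤ j) (hj' : 1 ≤ j')
    (h : nthAvoid lo f j = nthAvoid lo f j') : j = j' := by
  unfold nthAvoid at h; split_ifs at h <;> omega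

lemma nthAvoid_one_le_of_ne {x y x' y' j j' X : ℕ} (hx : 1 ≤ x) (hx' : 1 ≤ x')
    (hport : nthAvoid 1 x j = nthAvoid 1 x' j')
    (hne : nthAvoid 1 (bplus y) j ≠ nthAvoid 1 (bplus y') j')
    (hX : max (max x y) (max x' y') ≤ X) : nthAvoid 1 x j ≤ X := by
  simp only [nthAvoid, bplus] at *
  split_ifs at * <;> omega

lemma nthAvoid_zero_le_of_ne {x y x' y' j j' X : ℕ} (hy : 1 ≤ y) (hy' : 1 ≤ y')
    (hport : nthAvoid 0 x j = nthAvoid 0 x' j') (hne : nthAvoid 1 y j ≠ nthAvoid 1 y' j')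
    (hX : max (max x y) (max x' y') ≤ X) : nthAvoid 0 x j ≤ X := by
  simp only [nthAvoid] at *
  split_ifs at * <;> omega

lemma pred_le_of_ne_nthAvoid {k x y j X : ℕ} (hy : 1 ≤ y)
    (hport : k - 1 = nthAvoid 0 x j) (hne : k ≠ nthAvoid 1 y j) (hX : max x y ≤ X) :
    k - 1 ≤ X := by
  simp only [nthAvoid] at *
  split_ifs at * <;> omega

def maxLab : List Nd → ℕ
  | [] => 0
  | c :: v => max (max c.1 c.2) (maxLab v)

lemma headI_fst_le_maxLab (v : List Nd) : v.headI.1 ≤ maxLab v := by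
  cases v with
  | nil => exact le_rfl
  | cons c v => simp only [List.headI_cons, maxLab]; omega

@[simp]
lemma outPort_cons_self (c : Nd) (v : List Nd) : outPort (c :: v) v = c.2 := by
  simp only [outPort, List.length_cons]
  rw [if_neg (by omega)]
  rfl

@[simp]
lemma outPort_self_cons (c : Nd) (v : List Nd) : outPort v (c :: v) = c.1 := by
  simp [outPort]

lemma Ed.length_eq {d : ℕ} {v u : List Nd} (h : Ed d v u) :
    u.length = v.length + 1 ∨ v.length = u.length + 1 := by
  obtain ⟨-, -, c, rfl | rfl⟩ := h <;> simp

namespace Vd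

variable {d : ℕ}

lemma tail {c : Nd} {v : List Nd} (h : Vd d (c :: v)) : Vd d v := by
  cases h with
  | base => exact nil
  | odd _ _ _ hv | even _ _ _ hv => exact hv

lemma ed_child {c : Nd} {v : List Nd} (h : Vd d (c :: v)) : Ed d v (c :: v) :=
  ⟨h.tail, h, c, Or.inl rfl⟩

lemma ed_parent {c : Nd} {v : List Nd} (h : Vd d (c :: v)) : Ed d (c :: v) v :=
  ⟨h, h.tail, c, Or.inr rfl⟩

lemma fst_bounds {c : Nd} {v : List Nd} (h : Vd d (c :: v)) : 1 ≤ c.1 ∧ c.1 ≤ d := by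
  cases h with
  | base k hk hkd => exact ⟨hk, hkd⟩
  | odd _ _ _ _ _ _ j hj hjd | even _ _ _ _ _ _ j hj hjd =>
    simp only [nthAvoid]; split_ifs <;> omega

lemma snd_pos {c : Nd} {v : List Nd} (h : Vd d (c :: v)) (hv : Odd v.length) : 1 ≤ c.2 := by
  cases h with
  | base => simp at hv
  | odd _ _ _ _ _ _ j hj => simp only [nthAvoid]; split_ifs <;> omega
  | even _ _ _ _ heven =>
    simp only [Nat.odd_iff, Nat.even_iff, List.length_cons] at hv heven
    omega

lemma snd_ne {c p : Nd} {v : List Nd} (h : Vd d (c :: p :: v)) : c.2 ≠ p.1 := by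
  cases h with
  | odd _ _ _ _ _ _ _ hj | even _ _ _ _ _ _ _ hj => exact nthAvoid_ne hj

lemma fst_le_max {c : Nd} {v : List Nd} (h : Vd d (c :: v)) :
    c.1 ≤ max c.2 (maxLab v) + (v.length + 1) % 2 := by
  cases h with
  | base => simp only [maxLab, List.length_nil]; omega
  | odd x y r hv hpar _ j | even x y r hv hpar _ j =>
    have hx := hv.fst_bounds
    have hxM := headI_fst_le_maxLab ((x, y) :: r)
    simp only [List.headI_cons, List.length_cons, Nat.odd_iff, Nat.even_iff] at hx hpar hxM ⊢
    simp only [nthAvoid]; split_ifs <;> omega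

lemma eq_of_snd_eq {c c' p : Nd} {a b : List Nd} (hc : Vd d (c :: p :: a))
    (hc' : Vd d (c' :: p :: b)) (hpar : a.length % 2 = b.length % 2) (h : c.2 = c'.2) :
    c = c' := by
  cases hc with
  | odd _ _ _ _ hodd _ j hj =>
    cases hc' with
    | odd _ _ _ _ _ _ j' hj' => rw [nthAvoid_injective hj hj' h]
    | even _ _ _ _ heven =>
      simp only [Nat.odd_iff, Nat.even_iff, List.length_cons] at hodd heven; omega
  | even _ _ _ _ heven _ j hj =>
    cases hc' with
    | odd _ _ _ _ hodd =>
      simp only [Nat.odd_iff, Nat.even_iff, List.length_cons] at hodd heven; omega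
    | even _ _ _ _ _ _ j' hj' => rw [nthAvoid_injective hj hj' h]

lemma snd_le_of_snd_eq {ca cb : Nd} {a b : List Nd} (ha : Vd d (ca :: a)) (hb : Vd d (cb :: b))
    (hpar : a.length % 2 = b.length % 2) (hport : ca.2 = cb.2) (hne : ca ≠ cb) :
    ca.2 ≤ max (maxLab a) (maxLab b) := by
  have hne₁ : ca.1 ≠ cb.1 := fun h => hne (Prod.ext h hport)
  cases ha with
  | base k =>
    cases hb with
    | base => simp only at hport hne₁; omega
    | odd _ _ _ _ hodd =>
      simp only [Nat.odd_iff, List.length_cons, List.length_nil] at hpar hodd; omega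
    | even x y r hv heven =>
      have hy := hv.snd_pos <| by
        simp only [Nat.even_iff, Nat.odd_iff, List.length_cons] at heven ⊢; omega
      exact pred_le_of_ne_nthAvoid hy hport hne₁ (by simp only [maxLab]; omega)
  | odd x y r hv hodd =>
    cases hb with
    | base => simp only [Nat.odd_iff, List.length_cons, List.length_nil] at hpar hodd; omega
    | odd x' y' r' hv' =>
      exact nthAvoid_one_le_of_ne hv.fst_bounds.1 hv'.fst_bounds.1 hport hne₁
        (by simp only [maxLab]; omega)
    | even _ _ _ _ heven =>
      simp only [Nat.odd_iff, Nat.even_iff, List.length_cons] at hpar hodd heven; omega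
  | even x y r hv heven =>
    have hy := hv.snd_pos <| by
      simp only [Nat.even_iff, Nat.odd_iff, List.length_cons] at heven ⊢; omega
    cases hb with
    | base =>
      have := pred_le_of_ne_nthAvoid hy hport.symm (Ne.symm hne₁) le_rfl
      simp only [maxLab]; omega
    | odd _ _ _ _ hodd =>
      simp only [Nat.odd_iff, Nat.even_iff, List.length_cons] at hpar hodd heven; omega
    | even x' y' r' hv' heven' =>
      have hy' := hv'.snd_pos <| by
        simp only [Nat.even_iff, Nat.odd_iff, List.length_cons] at heven' ⊢; omega
      exact nthAvoid_zero_le_of_ne hy hy' hport hne₁ (by simp only [maxLab]; omega)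

end Vd

/-- A new label exceeds the labels above it by at most one, and only when it is attached below
an even depth; the parity term pays for that half step. -/
def Fits (d n : ℕ) (v : List Nd) : Prop :=
  n + 2 * maxLab v ≤ 2 * d + v.length % 2

namespace Fits

variable {d n : ℕ}

lemma mono {m : ℕ} {v : List Nd} (h : Fits d n v) (hmn : m ≤ n) : Fits d m v := by
  unfold Fits at *; omega

lemma tail {c : Nd} {v : List Nd} (h : Fits d (n + 1) (c :: v)) : Fits d n v := by
  simp only [Fits, maxLab, List.length_cons] at *; omega

lemma cons {c : Nd} {a b : List Nd} (ha : Fits d (n + 1) a) (hb : Fits d (n + 1) b)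
    (hpar : a.length % 2 = b.length % 2)
    (hc : max c.1 c.2 ≤ max (maxLab a) (maxLab b) + (a.length + 1) % 2) :
    Fits d n (c :: a) := by
  simp only [Fits, maxLab, List.length_cons] at *; omega

end Fits

def Alike (d n : ℕ) (a b : List Nd) : Prop :=
  ∃ s a₀ b₀, a = s ++ a₀ ∧ b = s ++ b₀ ∧
    Fits d (n - s.length) a₀ ∧ Fits d (n - s.length) b₀

namespace Alike

variable {d n : ℕ}

lemma symm {a b : List Nd} (h : Alike d n a b) : Alike d n b a :=
  let ⟨s, a₀, b₀, ha, hb, ha₀, hb₀⟩ := h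
  ⟨s, b₀, a₀, hb, ha, hb₀, ha₀⟩

lemma mono {m : ℕ} {a b : List Nd} (h : Alike d n a b) (hmn : m ≤ n) : Alike d m a b :=
  let ⟨s, a₀, b₀, ha, hb, ha₀, hb₀⟩ := h
  ⟨s, a₀, b₀, ha, hb, ha₀.mono (by omega), hb₀.mono (by omega)⟩

lemma tail {ca cb : Nd} {a b : List Nd} (h : Alike d (n + 1) (ca :: a) (cb :: b)) :
    Alike d n a b := by
  obtain ⟨_ | ⟨c, s⟩, a₀, b₀, ha, hb, ha₀, hb₀⟩ := h
  · rw [List.nil_append] at ha hb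
    subst ha hb
    exact ⟨[], a, b, rfl, rfl, ha₀.tail, hb₀.tail⟩
  · simp only [List.cons_append, List.cons.injEq] at ha hb
    obtain ⟨rfl, rfl⟩ := ha
    obtain ⟨rfl, rfl⟩ := hb
    rw [List.length_cons, Nat.add_sub_add_right] at ha₀ hb₀
    exact ⟨s, a₀, b₀, rfl, rfl, ha₀, hb₀⟩

lemma cons_cons {ca cb : Nd} {a b : List Nd} (h : Alike d (n + 1) a b) (ha : Vd d (ca :: a))
    (hb : Vd d (cb :: b)) (hpar : a.length % 2 = b.length % 2) (hport : ca.2 = cb.2) :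
    Alike d n (ca :: a) (cb :: b) := by
  obtain ⟨s, a₀, b₀, rfl, rfl, ha₀, hb₀⟩ := h
  by_cases hc : ca = cb
  · subst hc
    have hbudget : n - (ca :: s).length ≤ n + 1 - s.length := by
      rw [List.length_cons]; omega
    exact ⟨ca :: s, a₀, b₀, rfl, rfl, ha₀.mono hbudget, hb₀.mono hbudget⟩
  cases s with
  | cons c s =>
    simp only [List.cons_append, List.length_cons] at ha hb hpar
    exact absurd (Vd.eq_of_snd_eq ha hb (by omega) hport) hc
  | nil =>
    simp only [List.nil_append] at ha hb hpar ⊢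
    have hport_le := Vd.snd_le_of_snd_eq ha hb hpar hport hc
    have ha₁ := ha.fst_le_max
    have hb₁ := hb.fst_le_max
    exact ⟨[], _, _, rfl, rfl, Fits.cons ha₀ hb₀ hpar (by omega),
      Fits.cons hb₀ ha₀ hpar.symm (by omega)⟩

lemma cons_tail {ca cb : Nd} {a b : List Nd} (h : Alike d (n + 1) a (cb :: b))
    (ha : Vd d (ca :: a)) (hpar : a.length % 2 = (cb :: b).length % 2) (hport : ca.2 = cb.1) :
    Alike d n (ca :: a) b := by
  obtain ⟨s, a₀, b₀, rfl, hb, ha₀, hb₀⟩ := h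
  cases s with
  | cons c s =>
    simp only [List.cons_append, List.cons.injEq] at ha hb
    exact absurd (hb.1 ▸ hport) ha.snd_ne
  | nil =>
    rw [List.nil_append] at hb
    subst hb
    have ha₁ := ha.fst_le_max
    have hcb : cb.1 ≤ maxLab (cb :: b) := by simp only [maxLab]; omega
    exact ⟨[], _, _, rfl, rfl, Fits.cons ha₀ hb₀ hpar (by omega), hb₀.tail⟩

lemma step {a b a' b' : List Nd} (h : Alike d (n + 1) a b) (ha : Ed d a a') (hb : Ed d b b')
    (hpar : a.length % 2 = b.length % 2) (hport : outPort a' a = outPort b' b) :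
    Alike d n a' b' := by
  obtain ⟨-, ha', ca, rfl | rfl⟩ := ha <;> obtain ⟨-, hb', cb, rfl | rfl⟩ := hb <;>
    simp only [outPort_cons_self, outPort_self_cons] at hport
  · exact h.cons_cons ha' hb' hpar hport
  · exact h.cons_tail ha' hpar hport
  · exact (h.symm.cons_tail hb' hpar.symm hport.symm).symm
  · exact h.tail

end Alike

lemma length_le_of_walk {d k : ℕ} {w : ℕ → List Nd} (hw : ∀ j < k, Ed d (w j) (w (j + 1)))
    {j : ℕ} (hj : j ≤ k) : (w j).length ≤ (w 0).length + j := by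
  induction j with
  | zero => exact le_rfl
  | succ j ih =>
    have := (hw j hj).length_eq
    have := ih (by omega)
    omega

lemma length_mod_two_of_walk {d k : ℕ} {w : ℕ → List Nd}
    (hw : ∀ j < k, Ed d (w j) (w (j + 1))) {j : ℕ} (hj : j ≤ k) :
    (w j).length % 2 = ((w 0).length + j) % 2 := by
  induction j with
  | zero => rfl
  | succ j ih =>
    have := (hw j hj).length_eq
    have := ih (by omega)
    omega

namespace IsPCW

variable {d k : ℕ} {w₁ w₂ : ℕ → List Nd}

lemma length_mod_two_eq (h : IsPCW d k w₁ w₂) {j : ℕ} (hj : j ≤ k) :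
    (w₁ j).length % 2 = (w₂ j).length % 2 := by
  have h₁ := length_mod_two_of_walk h.walk₁ hj
  have h₂ := length_mod_two_of_walk h.walk₂ hj
  rw [h.start₁, List.length_singleton] at h₁
  rw [h.start₂, List.length_singleton] at h₂
  omega

lemma alike (h : IsPCW d k w₁ w₂) (hd : 2 ≤ d) {j : ℕ} (hj : j ≤ k) :
    Alike d (2 * d - 3 - j) (w₁ j) (w₂ j) := by
  induction j with
  | zero =>
    rw [h.start₁, h.start₂]
    refine ⟨[], _, _, rfl, rfl, ?_, ?_⟩ <;>
      simp only [Fits, maxLab, List.length_singleton] <;> omega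
  | succ j ih =>
    have hport := h.compat (j + 1) (by omega) hj
    rw [Nat.add_sub_cancel] at hport
    have hprev := ih (by omega)
    rw [show 2 * d - 3 - j = 2 * d - 3 - (j + 1) + 1 by have := h.klen; omega] at hprev
    exact hprev.step (h.walk₁ j hj) (h.walk₂ j hj) (h.length_mod_two_eq (by omega)) hport

end IsPCW

/-- At even depth the children get the ports `c₂ʲ`, `j ≤ d − 1`, from `{0, …, d−1} \ {b₁}`, so
`d − 1` is missing exactly when `b₁ = d`, and then the parent port `d` replaces it. At the root
`headI` is `(0, 0)`. -/
def portSet (d : ℕ) (v : List Nd) : Set ℕ :=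
  if Odd v.length then Set.Icc 1 d
  else {p | p + 1 < d ∨ (p + 1 = d ∧ v.headI.1 ≠ d) ∨ (p = d ∧ v.headI.1 = d)}

lemma outPort_mem_portSet {d : ℕ} {v x : List Nd} (h : Ed d v x) :
    outPort x v ∈ portSet d v := by
  obtain ⟨hv, hx, c, rfl | rfl⟩ := h
  · rw [outPort_cons_self]
    cases hx with
    | base k hk hkd =>
      simp only [portSet, List.length_nil, Nat.not_odd_zero, if_false, Set.mem_ofPred_eq]
      change _ ∨ (_ ∧ 0 ≠ d) ∨ (_ ∧ 0 = d)
      omega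
    | odd x y r _ hodd _ j hj hjd =>
      simp only [portSet, hodd, if_true, Set.mem_Icc, nthAvoid]
      split_ifs <;> omega
    | even x y r _ heven _ j hj hjd =>
      simp only [portSet, Nat.not_odd_iff_even.2 heven, if_false, List.headI_cons,
        Set.mem_ofPred_eq, nthAvoid]
      split_ifs <;> omega
  · rw [outPort_self_cons]
    have := hv.fst_bounds
    unfold portSet
    split_ifs
    · exact this
    · simp only [List.headI_cons, Set.mem_ofPred_eq]; omega

lemma Vd.exists_child {d p : ℕ} {c : Nd} {r : List Nd} (hv : Vd d (c :: r))
    (hlen : (c :: r).length < 2 * d) (hp : p ∈ portSet d (c :: r)) (hpc : p ≠ c.1) :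
    ∃ c', Vd d (c' :: c :: r) ∧ c'.2 = p := by
  obtain ⟨x, y⟩ := c
  have hx := hv.fst_bounds
  rcases Nat.even_or_odd ((x, y) :: r).length with heven | hodd
  · simp only [portSet, Nat.not_odd_iff_even.2 heven, if_false, List.headI_cons,
      Set.mem_ofPred_eq] at hp hx hpc
    obtain ⟨j, hj, hjd, rfl⟩ : ∃ j, 1 ≤ j ∧ j ≤ d - 1 ∧ nthAvoid 0 x j = p :=
      ⟨if p < x then p + 1 else p, by split_ifs <;> omega, by split_ifs <;> omega,
        by unfold nthAvoid; split_ifs <;> omega⟩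
    exact ⟨_, Vd.even x y r hv heven hlen j hj hjd, rfl⟩
  · simp only [portSet, hodd, if_true, Set.mem_Icc] at hp hx hpc
    obtain ⟨j, hj, hjd, rfl⟩ : ∃ j, 1 ≤ j ∧ j ≤ d - 1 ∧ nthAvoid 1 x j = p :=
      ⟨if p < x then p else p - 1, by split_ifs <;> omega, by split_ifs <;> omega,
        by unfold nthAvoid; split_ifs <;> omega⟩
    exact ⟨_, Vd.odd x y r hv hodd hlen j hj hjd, rfl⟩

lemma exists_ed_outPort_eq {d p : ℕ} {v : List Nd} (hv : Vd d v) (hlen : v.length < 2 * d)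
    (hp : p ∈ portSet d v) : ∃ x, Ed d v x ∧ outPort x v = p := by
  cases v with
  | nil =>
    have hroot : ([] : List Nd).headI.1 = 0 := rfl
    simp only [portSet, List.length_nil, Nat.not_odd_zero, if_false, Set.mem_ofPred_eq]
      at hp hlen
    have hchild : Vd d [(p + 1, p)] := Vd.base (p + 1) (by omega) (by omega)
    exact ⟨_, hchild.ed_child, outPort_cons_self _ _⟩
  | cons c r =>
    by_cases hpc : p = c.1
    · exact ⟨r, hv.ed_parent, by rw [outPort_self_cons, hpc]⟩
    obtain ⟨c', hc', rfl⟩ := hv.exists_child hlen hp hpc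
    exact ⟨_, hc'.ed_child, outPort_cons_self _ _⟩

lemma portSet_eq_of_alike {d : ℕ} {a b : List Nd} (h : Alike d 1 a b)
    (hpar : a.length % 2 = b.length % 2) : portSet d a = portSet d b := by
  have hodd : Odd a.length ↔ Odd b.length := by simp only [Nat.odd_iff, hpar]
  unfold portSet
  by_cases ha : Odd a.length
  · rw [if_pos ha, if_pos (hodd.1 ha)]
  rw [if_neg ha, if_neg (mt hodd.2 ha)]
  suffices htop : a.headI.1 = d ↔ b.headI.1 = d by simp only [ne_eq, htop]
  obtain ⟨s, a₀, b₀, rfl, rfl, ha₀, hb₀⟩ := h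
  cases s with
  | cons c s => exact Iff.rfl
  | nil =>
    have := headI_fst_le_maxLab a₀
    have := headI_fst_le_maxLab b₀
    simp only [Fits, List.nil_append, List.length_nil, Nat.odd_iff] at *
    exact iff_of_false (by omega) (by omega)

theorem PSW_length_lower_bound_general (d k : ℕ) (w₁ w₂ : ℕ → List Nd)
    (h : IsPSW d k w₁ w₂) :
    2 * d - 3 ≤ k := by
  by_contra! hk
  obtain ⟨x, hx, hsep⟩ := h.sep
  have hports : portSet d (w₁ k) = portSet d (w₂ k) :=
    portSet_eq_of_alike ((h.alike (by omega) le_rfl).mono (by omega))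
      (h.length_mod_two_eq le_rfl)
  have hvd : Vd d (w₂ k) := by
    rcases k with _ | j
    · exact h.start₂ ▸ Vd.base 2 (by omega) (by omega)
    · exact (h.walk₂ j (by omega)).2.1
  have hlen := length_le_of_walk h.walk₂ le_rfl
  rw [h.start₂, List.length_singleton] at hlen
  obtain ⟨y, hy, hport⟩ :=
    exists_ed_outPort_eq hvd (by omega) (hports ▸ outPort_mem_portSet hx)
  exact hsep y hy hport.symm

/-- Every PSW of length `k` in `G_d` satisfies `k ≥ 2d − 3`. -/
theorem PSW_length_lower_bound (d k : ℕ) (hd : 2 ≤ d) (w₁ w₂ : ℕ → List Nd)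
    (h : IsPSW d k w₁ w₂) :
    2 * d - 3 ≤ k :=
  PSW_length_lower_bound_general d k w₁ w₂ h

end Paper
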